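/- Let G be a connected finite simple graph. Then every sign function π on G with ρ(G_π) < ρ(G) satisfies ρ(G_π) < max_{e ∈ E} ρ(G−e). Consequently, if the set Γ(G) of signed graphs on G whose spectral radius is less than ρ(G) is nonempty, then ρ_Γ(G) := max{ρ(G_π) : ρ(G_π) < ρ(G)} < max_{e ∈ E} ρ(G−e). -/

import Mathlib

open Matrix Finset
open scoped Classical

noncomputable section

/-- `μ` is an eigenvalue of the real matrix `A`. -/
def IsEigenval {n : Type*} [Fintype n] (A : Matrix n n ℝ) (μ : ℝ) : Prop :=
  ∃ x : n → ℝ, x ≠ 0 ∧ A.mulVec x = μ • x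

/-- The spectral radius of a real symmetric matrix:
the largest modulus of an eigenvalue. -/
def specRad {n : Type*} [Fintype n] (A : Matrix n n ℝ) : ℝ :=
  sSup {r : ℝ | ∃ μ : ℝ, IsEigenval A μ ∧ r = |μ|}

/-- The spectral radius of a finite simple graph. -/
def grho {V : Type*} [Fintype V] [DecidableEq V] (G : SimpleGraph V) : ℝ :=
  letI := Classical.decRel G.Adj
  specRad (G.adjMatrix ℝ)

/-- max over edges of spectral radius of the edge-deleted graph -/
def rhoE {V : Type*} [Fintype V] [DecidableEq V] (G : SimpleGraph V) : ℝ :=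
  sSup {r : ℝ | ∃ e ∈ G.edgeSet, r = grho (G.deleteEdges {e})}

/-- Eigenpair of the k-power hypergraph G^(k). -/
def IsPowerEigenpair {V : Type*} [Fintype V] [DecidableEq V] (G : SimpleGraph V) (k : ℕ)
    (lam : ℂ) (x : (V ⊕ (G.edgeSet × Fin (k - 2))) → ℂ) : Prop :=
  x ≠ 0 ∧
    (∀ i : V, lam * x (Sum.inl i) ^ (k - 1) =
      ∑ j : V, if h : G.Adj i j then
        x (Sum.inl j) * ∏ t : Fin (k - 2), x (Sum.inr (⟨s(i, j), (G.mem_edgeSet).mpr h⟩, t))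
      else 0) ∧
    ∀ (i j : V) (h : G.Adj i j) (t : Fin (k - 2)),
      lam * x (Sum.inr (⟨s(i, j), (G.mem_edgeSet).mpr h⟩, t)) ^ (k - 1) =
        x (Sum.inl i) * x (Sum.inl j) *
          ∏ u ∈ Finset.univ.erase t, x (Sum.inr (⟨s(i, j), (G.mem_edgeSet).mpr h⟩, u))

/-- λ is an eigenvalue of G^(k). -/
def IsPowerEigenvalue {V : Type*} [Fintype V] [DecidableEq V] (G : SimpleGraph V) (k : ℕ)
    (lam : ℂ) : Prop :=
  ∃ x, IsPowerEigenpair G k lam x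

/-- The adjacency matrix of a signed graph, sign function `π : G.edgeSet → ℤˣ`. -/
def signedAdj {V : Type*} [Fintype V] [DecidableEq V] (G : SimpleGraph V)
    (π : G.edgeSet → ℤˣ) : Matrix V V ℝ :=
  Matrix.of fun i j => if h : G.Adj i j then ((π ⟨s(i, j), (G.mem_edgeSet).mpr h⟩ : ℤ) : ℝ) else 0

/-- Switching-equivalence of matrices. -/
def SwitchEquiv {V : Type*} [Fintype V] [DecidableEq V] (A B : Matrix V V ℝ) : Prop :=
  ∃ d : V → ℝ, (∀ i, d i = 1 ∨ d i = -1) ∧ B = Matrix.diagonal d * A * Matrix.diagonal d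

/-- A signed graph is balanced if it is switching equivalent to the all-`+1` signing. -/
def IsBalanced {V : Type*} [Fintype V] [DecidableEq V] (G : SimpleGraph V)
    (π : G.edgeSet → ℤˣ) : Prop :=
  SwitchEquiv (signedAdj G π) (signedAdj G fun _ => 1)

def IsBipartite {V : Type*} (G : SimpleGraph V) : Prop :=
  ∃ c : V → Bool, ∀ ⦃i j⦄, G.Adj i j → c i ≠ c j

end

/-!
Let `A` be a signing of `G` with `ρ(A) < ρ(G)`. Replacing `A` by `-A` if necessary, `A x = r x`
for some `x ≠ 0` with `r = ρ(A)`. Put `p = |x|`. For every edge `uv`,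
`r ‖p‖² = xᵀ A x ≤ pᵀ A(G - uv) p + 2 A_uv x_u x_v`.
* If `A_uv x_u x_v < 0` for some edge, the Rayleigh quotient of `p` for `G - uv` exceeds `r`.
* If `x_u = 0` for some `u`, connectivity gives an edge `uv` with `x_v ≠ 0`. The eigen-equation at
  `u` then gives a second neighbour `w` of `u` with `x_w ≠ 0`, so `(A(G - uv) p)_u > 0`, and moving
  `p` slightly towards `e_u` pushes the Rayleigh quotient for `G - uv` above `r`.
* Otherwise switching by the signs of `x` turns `A` into the adjacency matrix of `G`, so
  `ρ(A) = ρ(G)`, which is impossible.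
Since there are only finitely many signings, the supremum `ρ_Γ(G)` is attained.
-/

section Spectral

variable {n : Type*} [Fintype n] [DecidableEq n] {A : Matrix n n ℝ}

theorem isEigenval_iff_mem_spectrum {μ : ℝ} : IsEigenval A μ ↔ μ ∈ spectrum ℝ A := by
  rw [← spectrum_toLin', ← Module.End.hasEigenvalue_iff_mem_spectrum]
  constructor
  · rintro ⟨x, hx, hAx⟩
    exact Module.End.hasEigenvalue_of_hasEigenvector
      (Module.End.hasEigenvector_iff.mpr ⟨by simpa using hAx, hx⟩)
  · intro h
    obtain ⟨x, hx⟩ := h.exists_hasEigenvector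
    exact ⟨x, hx.2, by simpa using (Module.End.hasEigenvector_iff.mp hx).1⟩

namespace Matrix.IsHermitian

theorem specRad_eq_sSup (hA : A.IsHermitian) :
    specRad A = sSup (Set.range fun i => |hA.eigenvalues i|) := by
  simp_rw [specRad, isEigenval_iff_mem_spectrum, hA.spectrum_real_eq_range_eigenvalues]
  congr 1
  ext; simp [eq_comm]

theorem abs_eigenvalues_le_specRad (hA : A.IsHermitian) (i : n) :
    |hA.eigenvalues i| ≤ specRad A := by
  rw [hA.specRad_eq_sSup]
  exact le_csSup (Set.finite_range _).bddAbove ⟨i, rfl⟩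

theorem exists_isEigenval_abs_eq_specRad [Nonempty n] (hA : A.IsHermitian) :
    ∃ μ, IsEigenval A μ ∧ |μ| = specRad A := by
  obtain ⟨i, hi⟩ :=
    (Set.range_nonempty _).csSup_mem (Set.finite_range fun i => |hA.eigenvalues i|)
  exact ⟨_, isEigenval_iff_mem_spectrum.mpr (hA.eigenvalues_mem_spectrum_real i),
    by rw [hA.specRad_eq_sSup, ← hi]⟩

theorem dotProduct_mulVec_le_specRad_mul (hA : A.IsHermitian) (x : n → ℝ) :
    x ⬝ᵥ (A *ᵥ x) ≤ specRad A * (x ⬝ᵥ x) := by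
  set U : Matrix n n ℝ := (hA.eigenvectorUnitary : Matrix n n ℝ)
  have hUt : star U = Uᵀ := conjTranspose_eq_transpose_of_trivial U
  have hUU : U * Uᵀ = 1 := hUt ▸ Matrix.mem_unitaryGroup_iff.mp hA.eigenvectorUnitary.2
  set z := Uᵀ *ᵥ x
  have hAx : A *ᵥ x = U *ᵥ (diagonal hA.eigenvalues *ᵥ z) := by
    conv_lhs => rw [hA.spectral_theorem]
    simp [hUt, mulVec_mulVec, z, U, Matrix.mul_assoc]
  have hquad : x ⬝ᵥ (A *ᵥ x) = z ⬝ᵥ (diagonal hA.eigenvalues *ᵥ z) := by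
    rw [hAx, dotProduct_mulVec, ← mulVec_transpose]
  have hnorm : x ⬝ᵥ x = z ⬝ᵥ z := by
    rw [dotProduct_mulVec, ← mulVec_transpose, transpose_transpose, mulVec_mulVec, hUU,
      one_mulVec]
  rw [hquad, hnorm, dotProduct, dotProduct, Finset.mul_sum]
  refine Finset.sum_le_sum fun i _ => ?_
  rw [mulVec_diagonal]
  have := (abs_le.mp (hA.abs_eigenvalues_le_specRad i)).2
  nlinarith [mul_self_nonneg (z i)]

theorem lt_specRad_of_lt_dotProduct_mulVec (hA : A.IsHermitian) {r : ℝ} {x : n → ℝ}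
    (h : r * (x ⬝ᵥ x) < x ⬝ᵥ (A *ᵥ x)) : r < specRad A := by
  have hR := hA.dotProduct_mulVec_le_specRad_mul x
  by_contra! hr
  nlinarith [mul_le_mul_of_nonneg_right hr (by simpa using dotProduct_self_star_nonneg x)]

/-- Pushing `x` along the `u`-th coordinate vector, where `x u = 0`, raises the quadratic form to
first order while `x ⬝ᵥ x` only grows to second order. -/
theorem lt_specRad_of_le_dotProduct_mulVec (hA : A.IsHermitian) {r : ℝ} {x : n → ℝ} {u : n}
    (h : r * (x ⬝ᵥ x) ≤ x ⬝ᵥ (A *ᵥ x)) (hxu : x u = 0) (hAxu : 0 < (A *ᵥ x) u) :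
    r < specRad A := by
  set t := (A *ᵥ x) u / (|r| + |A u u| + 1)
  have ht : 0 < t := by positivity
  have htc : t * (|r| + |A u u| + 1) = (A *ᵥ x) u := div_mul_cancel₀ _ (by positivity)
  set y := x + t • Pi.single u 1
  have hyy : y ⬝ᵥ y = x ⬝ᵥ x + t ^ 2 := by
    simp [y, dotProduct_add, add_dotProduct, hxu]; ring
  have hyAy : y ⬝ᵥ (A *ᵥ y) = x ⬝ᵥ (A *ᵥ x) + 2 * t * (A *ᵥ x) u + t ^ 2 * A u u := by
    have hsymm : x ⬝ᵥ (A *ᵥ Pi.single u 1) = (A *ᵥ x) u := by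
      rw [dotProduct_mulVec, ← mulVec_transpose, (isHermitian_iff_isSymm.mp hA).eq,
        dotProduct_single, mul_one]
    have hsingle : (A *ᵥ Pi.single u 1) u = A u u := by simp
    simp only [y, mulVec_add, mulVec_smul, dotProduct_add, add_dotProduct, dotProduct_smul,
      smul_dotProduct, hsymm, single_dotProduct, hsingle, smul_eq_mul]
    ring
  refine hA.lt_specRad_of_lt_dotProduct_mulVec (x := y) ?_
  rw [hyy, hyAy]
  nlinarith [le_abs_self r, neg_abs_le (A u u)]

end Matrix.IsHermitian

end Spectral

section Matrix

variable {n : Type*} [Fintype n] {A B C : Matrix n n ℝ}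

theorem dotProduct_mulVec_le_of_abs_le (h : ∀ i j, |A i j| ≤ C i j) (x : n → ℝ) :
    x ⬝ᵥ (A *ᵥ x) ≤ |x| ⬝ᵥ (C *ᵥ |x|) := by
  simp only [dotProduct, mulVec, Finset.mul_sum]
  refine Finset.sum_le_sum fun i _ => Finset.sum_le_sum fun j _ => ?_
  calc x i * (A i j * x j) ≤ |x i * (A i j * x j)| := le_abs_self _
    _ = |x| i * (|A i j| * |x| j) := by simp [abs_mul]
    _ ≤ |x| i * (C i j * |x| j) := by gcongr; exacts [abs_nonneg _, abs_nonneg _, h i j]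

theorem dotProduct_single_mulVec [DecidableEq n] (x : n → ℝ) (i j : n) (c : ℝ) :
    x ⬝ᵥ (single i j c *ᵥ x) = x i * c * x j := by
  rw [single_mulVec_eq, dotProduct_smul, dotProduct_single, smul_eq_mul]; ring

theorem abs_dotProduct_abs (x : n → ℝ) : |x| ⬝ᵥ |x| = x ⬝ᵥ x := by
  simp [dotProduct, abs_mul_abs_self]

theorem specRad_neg : specRad (-A) = specRad A := by
  have h : ∀ μ, IsEigenval (-A) μ ↔ IsEigenval A (-μ) := fun μ => by
    simp only [IsEigenval, neg_mulVec, neg_smul, neg_eq_iff_eq_neg]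
  unfold specRad
  congr 1
  ext r
  constructor
  · rintro ⟨μ, hμ, rfl⟩; exact ⟨-μ, (h μ).mp hμ, (abs_neg μ).symm⟩
  · rintro ⟨μ, hμ, rfl⟩; exact ⟨-μ, (h (-μ)).mpr (by rwa [neg_neg]), (abs_neg μ).symm⟩

theorem diagonal_mul_diagonal_self_of_sign [DecidableEq n] {d : n → ℝ}
    (hd : ∀ i, d i = 1 ∨ d i = -1) : diagonal d * diagonal d = 1 := by
  rw [diagonal_mul_diagonal, ← diagonal_one]
  congr 1; ext i; rcases hd i with h | h <;> simp [h]

theorem SwitchEquiv.symm [DecidableEq n] (h : SwitchEquiv A B) : SwitchEquiv B A := by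
  obtain ⟨d, hd, rfl⟩ := h
  have hdd := diagonal_mul_diagonal_self_of_sign hd
  refine ⟨d, hd, ?_⟩
  simp only [← Matrix.mul_assoc, hdd, Matrix.one_mul]
  rw [Matrix.mul_assoc, hdd, Matrix.mul_one]

theorem SwitchEquiv.isEigenval [DecidableEq n] (h : SwitchEquiv A B) {μ : ℝ}
    (hμ : IsEigenval A μ) : IsEigenval B μ := by
  obtain ⟨d, hd, rfl⟩ := h
  have hdd := diagonal_mul_diagonal_self_of_sign hd
  obtain ⟨x, hx, hAx⟩ := hμ
  refine ⟨diagonal d *ᵥ x, fun h0 => hx ?_, ?_⟩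
  · simpa [mulVec_mulVec, hdd] using congrArg (diagonal d *ᵥ ·) h0
  · rw [mulVec_mulVec, Matrix.mul_assoc, hdd, Matrix.mul_one, ← mulVec_mulVec, hAx, mulVec_smul]

theorem SwitchEquiv.specRad_eq [DecidableEq n] (h : SwitchEquiv A B) :
    specRad B = specRad A := by
  unfold specRad
  congr 1
  ext r
  constructor
  · rintro ⟨μ, hμ, rfl⟩; exact ⟨μ, h.symm.isEigenval hμ, rfl⟩
  · rintro ⟨μ, hμ, rfl⟩; exact ⟨μ, h.isEigenval hμ, rfl⟩

end Matrix

section Graph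

theorem adjMatrix_nonneg {V : Type*} (G : SimpleGraph V) [DecidableRel G.Adj] (i j : V) :
    0 ≤ G.adjMatrix ℝ i j := by
  rw [SimpleGraph.adjMatrix_apply]; split_ifs <;> norm_num

theorem isHermitian_adjMatrix {V : Type*} (G : SimpleGraph V) [DecidableRel G.Adj] :
    (G.adjMatrix ℝ).IsHermitian :=
  isHermitian_iff_isSymm.mpr G.isSymm_adjMatrix

variable {V : Type*} {G : SimpleGraph V} {A : Matrix V V ℝ}

theorem adj_of_apply_ne_zero (habs : ∀ i j, |A i j| = G.adjMatrix ℝ i j) {i j : V}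
    (h : A i j ≠ 0) : G.Adj i j := by
  by_contra hij
  rw [← abs_ne_zero, habs, SimpleGraph.adjMatrix_apply, if_neg hij] at h
  exact h rfl

variable [DecidableEq V]

theorem abs_apply_le_adjMatrix_deleteEdges (habs : ∀ i j, |A i j| = G.adjMatrix ℝ i j)
    {u v : V} (huv : u ≠ v) (i j : V) :
    |(A - single u v (A u v) - single v u (A v u)) i j| ≤
      (G.deleteEdges {s(u, v)}).adjMatrix ℝ i j := by
  by_cases he : s(i, j) = s(u, v)
  · rcases Sym2.eq_iff.mp he with ⟨rfl, rfl⟩ | ⟨rfl, rfl⟩ <;> simp [huv, huv.symm]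
  · have hne : ¬(u = i ∧ v = j) ∧ ¬(v = i ∧ u = j) := by
      constructor <;> rintro ⟨rfl, rfl⟩ <;> simp [Sym2.eq_swap] at he
    simp [hne.1, hne.2, he, habs, SimpleGraph.adjMatrix_apply]

variable [Fintype V]

theorem grho_eq_specRad_adjMatrix (G : SimpleGraph V) [DecidableRel G.Adj] :
    grho G = specRad (G.adjMatrix ℝ) := by
  unfold grho; congr

theorem isHermitian_signedAdj (π : G.edgeSet → ℤˣ) : (signedAdj G π).IsHermitian := by
  refine isHermitian_iff_isSymm.mpr (IsSymm.ext fun i j => ?_)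
  by_cases h : G.Adj i j
  · simp [signedAdj, h, h.symm, Sym2.eq_swap]
  · simp [signedAdj, h, G.adj_comm]

theorem abs_signedAdj_apply (π : G.edgeSet → ℤˣ) (i j : V) :
    |signedAdj G π i j| = G.adjMatrix ℝ i j := by
  by_cases h : G.Adj i j
  · rcases Int.units_eq_one_or (π ⟨s(i, j), G.mem_edgeSet.mpr h⟩) with hπ | hπ <;>
      simp [signedAdj, h, hπ]
  · simp [signedAdj, h]

theorem switchEquiv_adjMatrix_of_mul_nonneg (habs : ∀ i j, |A i j| = G.adjMatrix ℝ i j)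
    {x : V → ℝ} (hx : ∀ i, x i ≠ 0) (hnn : ∀ i j, 0 ≤ A i j * x i * x j) :
    SwitchEquiv (G.adjMatrix ℝ) A := by
  refine ⟨fun i => |x i| / x i, fun i => ?_, ?_⟩
  · rcases (hx i).lt_or_gt with h | h
    · right; show |x i| / x i = -1; rw [abs_of_neg h, neg_div, div_self h.ne]
    · left; show |x i| / x i = 1; rw [abs_of_pos h, div_self h.ne']
  · ext i j
    have h : A i j * x i * x j = G.adjMatrix ℝ i j * |x i| * |x j| := by
      rw [← abs_of_nonneg (hnn i j), abs_mul, abs_mul, habs]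
    rw [mul_diagonal, diagonal_mul]
    field_simp [hx i, hx j]
    linarith

theorem grho_deleteEdges_le_rhoE {e : Sym2 V} (he : e ∈ G.edgeSet) :
    grho (G.deleteEdges {e}) ≤ rhoE G := by
  refine le_csSup ((G.edgeSet.toFinite.image fun e => grho (G.deleteEdges {e})).bddAbove.mono ?_)
    ⟨e, he, rfl⟩
  rintro _ ⟨e, he, rfl⟩
  exact ⟨e, he, rfl⟩

theorem dotProduct_mulVec_le_deleteEdges (hA : A.IsHermitian)
    (habs : ∀ i j, |A i j| = G.adjMatrix ℝ i j) {u v : V} (huv : G.Adj u v) (x : V → ℝ) :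
    x ⬝ᵥ (A *ᵥ x) ≤
      |x| ⬝ᵥ ((G.deleteEdges {s(u, v)}).adjMatrix ℝ *ᵥ |x|) + 2 * (A u v * x u * x v) := by
  have hvu : A v u = A u v := (isHermitian_iff_isSymm.mp hA).apply u v
  have hsplit : x ⬝ᵥ (A *ᵥ x) = x ⬝ᵥ ((A - single u v (A u v) - single v u (A v u)) *ᵥ x)
      + 2 * (A u v * x u * x v) := by
    simp only [sub_mulVec, dotProduct_sub, dotProduct_single_mulVec, hvu]; ring
  rw [hsplit]
  gcongr
  exact dotProduct_mulVec_le_of_abs_le (abs_apply_le_adjMatrix_deleteEdges habs huv.ne) x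

variable {r : ℝ} {x : V → ℝ}

theorem lt_grho_deleteEdges_of_mul_neg (hA : A.IsHermitian)
    (habs : ∀ i j, |A i j| = G.adjMatrix ℝ i j) (hAx : A *ᵥ x = r • x) {u v : V}
    (huv : G.Adj u v) (hneg : A u v * x u * x v < 0) :
    r < grho (G.deleteEdges {s(u, v)}) := by
  rw [grho_eq_specRad_adjMatrix]
  refine (isHermitian_adjMatrix _).lt_specRad_of_lt_dotProduct_mulVec (x := |x|) ?_
  have := dotProduct_mulVec_le_deleteEdges hA habs huv x
  rw [hAx, dotProduct_smul, smul_eq_mul, ← abs_dotProduct_abs] at this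
  linarith

theorem lt_grho_deleteEdges_of_apply_eq_zero (hA : A.IsHermitian)
    (habs : ∀ i j, |A i j| = G.adjMatrix ℝ i j) (hAx : A *ᵥ x = r • x) {u v : V}
    (huv : G.Adj u v) (hxu : x u = 0) (hxv : x v ≠ 0) :
    r < grho (G.deleteEdges {s(u, v)}) := by
  have hrow : ∑ j, A u j * x j = 0 := by simpa [mulVec, dotProduct, hxu] using congrFun hAx u
  have hAuv : A u v ≠ 0 := by
    rw [← abs_ne_zero, habs]; simp [huv]
  obtain ⟨w, hw, hAw⟩ : ∃ w ∈ univ.erase v, A u w * x w ≠ 0 := by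
    refine exists_ne_zero_of_sum_ne_zero ?_
    rw [Finset.sum_erase_eq_sub (mem_univ v), hrow]
    simp [hAuv, hxv]
  have huw : (G.deleteEdges {s(u, v)}).Adj u w := by
    rw [SimpleGraph.deleteEdges_adj, Set.mem_singleton_iff, Sym2.congr_right]
    exact ⟨adj_of_apply_ne_zero habs (left_ne_zero_of_mul hAw), ne_of_mem_erase hw⟩
  have hpos : 0 < ((G.deleteEdges {s(u, v)}).adjMatrix ℝ *ᵥ |x|) u := by
    calc 0 < |x w| := abs_pos.mpr (right_ne_zero_of_mul hAw)
      _ = (G.deleteEdges {s(u, v)}).adjMatrix ℝ u w * |x| w := by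
        rw [SimpleGraph.adjMatrix_apply, if_pos huw, one_mul, Pi.abs_apply]
      _ ≤ _ := Finset.single_le_sum
          (f := fun j => (G.deleteEdges {s(u, v)}).adjMatrix ℝ u j * |x| j)
          (fun j _ => mul_nonneg (adjMatrix_nonneg _ u j) (abs_nonneg x j)) (mem_univ w)
  have hquad := dotProduct_mulVec_le_deleteEdges hA habs huv x
  rw [hAx, dotProduct_smul, smul_eq_mul, ← abs_dotProduct_abs, hxu] at hquad
  rw [grho_eq_specRad_adjMatrix]
  exact (isHermitian_adjMatrix _).lt_specRad_of_le_dotProduct_mulVec (x := |x|) (u := u)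
    (by simpa using hquad) (by simp [hxu]) hpos

theorem exists_lt_grho_deleteEdges_of_eigenvector (hG : G.Connected) (hA : A.IsHermitian)
    (habs : ∀ i j, |A i j| = G.adjMatrix ℝ i j) (hlt : specRad A < grho G) (hx : x ≠ 0)
    (hAx : A *ᵥ x = specRad A • x) :
    ∃ e ∈ G.edgeSet, specRad A < grho (G.deleteEdges {e}) := by
  by_cases hneg : ∃ u v, G.Adj u v ∧ A u v * x u * x v < 0
  · obtain ⟨u, v, huv, h⟩ := hneg
    exact ⟨s(u, v), huv, lt_grho_deleteEdges_of_mul_neg hA habs hAx huv h⟩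
  by_cases hzero : ∃ u, x u = 0
  · obtain ⟨u, hu⟩ := hzero
    obtain ⟨w, hw⟩ := Function.ne_iff.mp hx
    obtain ⟨d, -, hd₁, hd₂⟩ :=
      (hG.preconnected u w).some.exists_boundary_dart {i | x i = 0} hu hw
    exact ⟨s(d.fst, d.snd), d.adj,
      lt_grho_deleteEdges_of_apply_eq_zero hA habs hAx d.adj hd₁ hd₂⟩
  push Not at hneg hzero
  have hnn : ∀ i j, 0 ≤ A i j * x i * x j := fun i j => by
    by_cases hij : G.Adj i j
    · exact hneg i j hij
    · simp [not_not.mp (mt (adj_of_apply_ne_zero habs) hij)]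
  have hswitch := (switchEquiv_adjMatrix_of_mul_nonneg habs hzero hnn).specRad_eq
  rw [grho_eq_specRad_adjMatrix] at hlt
  exact absurd hswitch hlt.ne

theorem exists_lt_grho_deleteEdges (hG : G.Connected) (hA : A.IsHermitian)
    (habs : ∀ i j, |A i j| = G.adjMatrix ℝ i j) (hlt : specRad A < grho G) :
    ∃ e ∈ G.edgeSet, specRad A < grho (G.deleteEdges {e}) := by
  have : Nonempty V := hG.nonempty
  obtain ⟨μ, ⟨x, hx, hAx⟩, hμ⟩ := hA.exists_isEigenval_abs_eq_specRad
  rcases le_or_gt 0 μ with h | h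
  · rw [abs_of_nonneg h] at hμ
    exact exists_lt_grho_deleteEdges_of_eigenvector hG hA habs hlt hx (hμ ▸ hAx)
  · rw [abs_of_neg h] at hμ
    simpa only [specRad_neg] using exists_lt_grho_deleteEdges_of_eigenvector (A := -A) hG hA.neg
      (by simpa using habs) (by rwa [specRad_neg]) hx
      (by rw [specRad_neg, neg_mulVec, hAx, ← hμ, neg_smul])

end Graph

/-- Every signing of a connected graph `G` with spectral radius below `ρ(G)`
has spectral radius below `max_{e ∈ E} ρ(G−e)`; consequently, if the set of such signings is
nonempty, its supremum `ρ_Γ(G)` is below `max_{e ∈ E} ρ(G−e)`. -/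
theorem rhoGamma_lt_rhoE
    {V : Type*} [Fintype V] [DecidableEq V] (G : SimpleGraph V)
    (hG : G.Connected) :
    (∀ π : G.edgeSet → ℤˣ, specRad (signedAdj G π) < grho G →
      specRad (signedAdj G π) < sSup {r : ℝ | ∃ e ∈ G.edgeSet, r = grho (G.deleteEdges {e})}) ∧
    ((∃ π : G.edgeSet → ℤˣ, specRad (signedAdj G π) < grho G) →
      sSup {r : ℝ | ∃ π : G.edgeSet → ℤˣ,
          specRad (signedAdj G π) < grho G ∧ r = specRad (signedAdj G π)} <
        sSup {r : ℝ | ∃ e ∈ G.edgeSet, r = grho (G.deleteEdges {e})}) := by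
  have hrhoE : ∀ π : G.edgeSet → ℤˣ, specRad (signedAdj G π) < grho G →
      specRad (signedAdj G π) < rhoE G := fun π hπ => by
    obtain ⟨e, he, hlt⟩ :=
      exists_lt_grho_deleteEdges hG (isHermitian_signedAdj π) (abs_signedAdj_apply π) hπ
    exact hlt.trans_le (grho_deleteEdges_le_rhoE he)
  refine ⟨hrhoE, fun ⟨π₀, hπ₀⟩ => ?_⟩
  have hfin : {r : ℝ | ∃ π : G.edgeSet → ℤˣ,
      specRad (signedAdj G π) < grho G ∧ r = specRad (signedAdj G π)}.Finite := by
    refine (Set.finite_range fun π : G.edgeSet → ℤˣ => specRad (signedAdj G π)).subset ?_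
    rintro _ ⟨π, -, rfl⟩
    exact ⟨π, rfl⟩
  obtain ⟨π, hπ, hsup⟩ := Set.Nonempty.csSup_mem (by exact ⟨_, π₀, hπ₀, rfl⟩) hfin
  rw [hsup]
  exact hrhoE π hπ
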